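/- arXiv:1409.0599 — 4 statements merged into one kernel-verified Lean document; each statement's English description precedes it below -/
import Mathlib

section
/- Let D be a discrete valuation ring with uniformizer z, let ω ≥ 1, and let F be an ω × n matrix over D of rank ω whose column module has invariant factors z^{i_1}, ..., z^{i_ω} with i_1 ≤ ... ≤ i_ω. If A is an n × ω matrix over D and δ ≥ 0 an integer such that F · A = z^δ · I_ω, then δ ≥ i_ω. -/
/-!
With `S` the Smith form, `F * A = z^δ • 1` becomes `S * (V * A) = z^δ • U⁻¹`. Every entry of
the last row of `S` is `0` or `z^{i_ω}`, so `z^{i_ω}` divides the whole last row of `z^δ • U⁻¹`.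
Since `U⁻¹` is invertible, some entry of that row is prime to `z`, hence `z^{i_ω} ∣ z^δ`.
-/

namespace Matrix

variable {m n o R : Type*} [CommRing R] [Fintype n]

theorem dvd_mul_apply_of_forall_dvd {d : R} {S : Matrix m n R} {r : m} (hS : ∀ k, d ∣ S r k)
    (B : Matrix n o R) (j : o) : d ∣ (S * B) r j :=
  Finset.dvd_sum fun k _ => (hS k).mul_right _

theorem exists_not_dvd_of_isUnit [Fintype m] [DecidableEq m] {M : Matrix m m R} (hM : IsUnit M)
    {p : R} (hp : ¬IsUnit p) (r : m) : ∃ j, ¬p ∣ M r j := by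
  obtain ⟨N, hMN⟩ := hM.exists_right_inv
  by_contra! h
  have hdvd : p ∣ (M * N) r r := dvd_mul_apply_of_forall_dvd h N r
  rw [hMN, one_apply_eq] at hdvd
  exact hp (isUnit_of_dvd_one hdvd)

theorem le_of_mul_mul_eq_pow_smul_one [IsDomain R] [Fintype m] [DecidableEq m] {p : R}
    (hp : Prime p) {U : Matrix m m R} (hU : IsUnit U) {S : Matrix m n R} {W : Matrix n m R}
    {a δ : ℕ} {r : m}
    (hS : ∀ k, p ^ a ∣ S r k) (h : U * S * W = p ^ δ • 1) : a ≤ δ := by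
  have hSW : S * W = p ^ δ • U⁻¹ := by
    calc S * W = U⁻¹ * (U * S * W) := by
          rw [Matrix.mul_assoc, ← Matrix.mul_assoc U⁻¹,
            nonsing_inv_mul U ((isUnit_iff_isUnit_det U).mp hU), Matrix.one_mul]
      _ = p ^ δ • U⁻¹ := by rw [h, Matrix.mul_smul, Matrix.mul_one]
  obtain ⟨j, hj⟩ := exists_not_dvd_of_isUnit (isUnit_nonsing_inv_iff.mpr hU) hp.not_isUnit r
  have hrow : p ^ a ∣ p ^ δ * U⁻¹ r j := by
    simpa [hSW] using dvd_mul_apply_of_forall_dvd hS W j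
  exact (pow_dvd_pow_iff hp.ne_zero hp.not_isUnit).mp (hp.pow_dvd_of_dvd_mul_right a hj hrow)

end Matrix

/-- If the column module of the full-rank `ω × n` matrix `F` over a DVR `D` has
invariant factors `z^{i_1}, …, z^{i_ω}` (expressed via a Smith normal form
decomposition `F = U · diag(z^{i_j}) · V` with `U, V` invertible and `i` monotone),
and if `F · A = z^δ · I`, then `δ ≥ i_ω`, the largest invariant factor valuation. -/
theorem stmt4 {ω n : ℕ} (hω : 0 < ω)
    (D : Type*) [CommRing D] [IsDomain D] [IsDiscreteValuationRing D]
    (z : D) (hz : Irreducible z)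
    (i : Fin ω → ℕ)
    (U : Matrix (Fin ω) (Fin ω) D) (V : Matrix (Fin n) (Fin n) D)
    (hU : IsUnit U)
    (F : Matrix (Fin ω) (Fin n) D)
    (hF : F = U * (Matrix.of fun (j : Fin ω) (k : Fin n) =>
        if (j : ℕ) = (k : ℕ) then z ^ i j else 0) * V)
    (A : Matrix (Fin n) (Fin ω) D) (δ : ℕ)
    (hA : F * A = z ^ δ • (1 : Matrix (Fin ω) (Fin ω) D)) :
    i ⟨ω - 1, by omega⟩ ≤ δ := by
  rw [hF, Matrix.mul_assoc _ V] at hA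
  refine Matrix.le_of_mul_mul_eq_pow_smul_one hz.prime hU (r := ⟨ω - 1, by omega⟩)
    (fun k => ?_) hA
  simp only [Matrix.of_apply]
  split_ifs
  exacts [dvd_rfl, dvd_zero _]
end

section
/- Let D be a discrete valuation ring with uniformizer z, and let F be an ω × n matrix over D of rank ω whose column module has invariant factors z^{i_1}, ..., z^{i_ω} with i_1 ≤ ... ≤ i_ω. Then there exists an n × ω matrix A over D with F · A = z^{i_ω} · I_ω. -/
/-!
Write `F = U S V` with `U`, `V` invertible and `S` the rectangular diagonal matrix with entries
`z^{i_j}`. Since the exponents increase, every diagonal entry divides `z^{i_ω}`, so `S` has a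
right inverse up to the scalar `z^{i_ω}`: the transposed diagonal matrix of cofactors
`z^{i_ω - i_j}`. Conjugating it by `V⁻¹` and `U⁻¹` gives the required `A`.
-/

namespace Matrix

def rectDiagonal {R : Type*} [Zero R] {m : ℕ} (n : ℕ) (d : Fin m → R) : Matrix (Fin m) (Fin n) R :=
  of fun j k => if (j : ℕ) = (k : ℕ) then d j else 0

theorem rectDiagonal_mul_transpose_rectDiagonal {R : Type*} [CommSemiring R] {m n : ℕ}
    (hmn : m ≤ n) (d e : Fin m → R) :
    rectDiagonal n d * (rectDiagonal n e)ᵀ = diagonal (d * e) := by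
  ext j j'
  rw [mul_apply, Finset.sum_eq_single (Fin.castLE hmn j)]
  · by_cases h : j = j'
    · subst h
      simp [rectDiagonal]
    · simp [rectDiagonal, h, Ne.symm (Fin.val_ne_of_ne h)]
  · intro k _ hk
    have : (j : ℕ) ≠ k := fun h => hk (Fin.ext h.symm)
    simp [rectDiagonal, this]
  · simp

theorem exists_rectDiagonal_mul_eq_smul_one_of_dvd {R : Type*} [CommSemiring R] {m n : ℕ}
    (hmn : m ≤ n) {d : Fin m → R} {c : R} (hd : ∀ j, d j ∣ c) :
    ∃ B : Matrix (Fin n) (Fin m) R, rectDiagonal n d * B = c • 1 := by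
  choose e he using hd
  refine ⟨(rectDiagonal n e)ᵀ, ?_⟩
  rw [rectDiagonal_mul_transpose_rectDiagonal hmn, smul_one_eq_diagonal]
  exact congrArg diagonal (funext fun j => (he j).symm)

theorem exists_mul_eq_smul_one_of_isUnit_mul_mul {R : Type*} [CommSemiring R] {m n : ℕ}
    {S : Matrix (Fin m) (Fin n) R} {c : R} (hS : ∃ B : Matrix (Fin n) (Fin m) R, S * B = c • 1)
    {U : Matrix (Fin m) (Fin m) R} {V : Matrix (Fin n) (Fin n) R} (hU : IsUnit U)
    (hV : IsUnit V) :
    ∃ A : Matrix (Fin n) (Fin m) R, U * S * V * A = c • 1 := by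
  obtain ⟨B, hB⟩ := hS
  obtain ⟨U', hU'⟩ := hU.exists_right_inv
  obtain ⟨V', hV'⟩ := hV.exists_right_inv
  refine ⟨V' * B * U', ?_⟩
  calc U * S * V * (V' * B * U') = U * (S * B) * U' := by
        simp only [Matrix.mul_assoc, ← Matrix.mul_assoc V V', hV', Matrix.one_mul]
    _ = c • 1 := by rw [hB, Matrix.mul_smul, Matrix.mul_one, Matrix.smul_mul, hU']

end Matrix

open Matrix in
/-- If the column module of the full-rank `ω × n` matrix `F` over a DVR `D` has
invariant factors `z^{i_1}, …, z^{i_ω}` (expressed via a Smith normal form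
decomposition with `i` monotone), then there exists `A` with `F · A = z^{i_ω} · I`. -/
theorem stmt5 {ω n : ℕ} (hω : 0 < ω) (hn : ω ≤ n)
    (D : Type*) [CommRing D]
    (z : D)
    (i : Fin ω → ℕ) (hmono : Monotone i)
    (U : Matrix (Fin ω) (Fin ω) D) (V : Matrix (Fin n) (Fin n) D)
    (hU : IsUnit U) (hV : IsUnit V)
    (F : Matrix (Fin ω) (Fin n) D)
    (hF : F = U * (Matrix.of fun (j : Fin ω) (k : Fin n) =>
        if (j : ℕ) = (k : ℕ) then z ^ i j else 0) * V) :
    ∃ A : Matrix (Fin n) (Fin ω) D,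
      F * A = z ^ (i ⟨ω - 1, by omega⟩) • (1 : Matrix (Fin ω) (Fin ω) D) := by
  have hdvd : ∀ j : Fin ω, z ^ i j ∣ z ^ i ⟨ω - 1, by omega⟩ := fun j =>
    pow_dvd_pow z (hmono (Fin.le_def.mpr (Nat.le_sub_one_of_lt j.isLt)))
  rw [hF]
  exact exists_mul_eq_smul_one_of_isUnit_mul_mul
    (exists_rectDiagonal_mul_eq_smul_one_of_dvd hn hdvd) hU hV
end

section
/- Let D be a discrete valuation ring with uniformizer z and valuation v, and let F be an ω × n matrix over D of rank ω. Let Δ_j denote a greatest common divisor of the determinants of all j × j submatrices of F. Then the minimum δ ≥ 0 for which there exists an n × ω matrix A over D with F · A = z^δ · I_ω equals v(Δ_ω) - v(Δ_{ω-1}). -/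
/-!
If `F * A = z ^ δ • 1`, let `M` be the `(ω - 1)`-minor of `F` on columns `c` and all rows but `i`.
Expanding the determinant of the matrix `[F A eᵢ | F_c]` along its first column gives `± z ^ δ * M`,
while expanding by linearity in that column gives a combination of `ω`-minors of `F`. Hence
`Δ_ω ∣ z ^ δ * Δ_{ω-1}`, i.e. `δ ≥ v(Δ_ω) - v(Δ_{ω-1})`.

Conversely, in a DVR some `ω × ω` submatrix `B` of `F` has `det B ∼ Δ_ω`. The entries of `adj B`
are `(ω - 1)`-minors of `F`, hence divisible by `Δ_{ω-1}`, and `B * (adj B / Δ_{ω-1})` is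
`det B / Δ_{ω-1} ∼ z ^ (v(Δ_ω) - v(Δ_{ω-1}))` times the identity.
-/

open Matrix

lemma pow_sub_dvd_of_pow_dvd_pow_mul {M : Type*} [CommMonoidWithZero M] [IsCancelMulZero M]
    {z x : M} {a b : ℕ} (hz : z ≠ 0) (h : z ^ a ∣ z ^ b * x) : z ^ (a - b) ∣ x := by
  rcases le_total a b with hab | hab
  · simp [Nat.sub_eq_zero_of_le hab]
  · rw [← Nat.add_sub_cancel' hab, pow_add] at h
    exact (mul_dvd_mul_iff_left (pow_ne_zero b hz)).mp h

lemma Irreducible.dvd_of_not_isUnit {D : Type*} [CommRing D] [IsDomain D]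
    [IsDiscreteValuationRing D] {z w : D} (hz : Irreducible z) (hw : ¬IsUnit w) : z ∣ w := by
  rw [← Ideal.mem_span_singleton, ← hz.maximalIdeal_eq]
  exact (IsLocalRing.mem_maximalIdeal w).mpr hw

lemma Irreducible.exists_associated_pow_of_isGCD {D : Type*} [CommRing D] [IsDomain D]
    [IsDiscreteValuationRing D] {z : D} (hz : Irreducible z) {ι : Type*} {f : ι → D} {a : ℕ}
    (hdvd : ∀ i, z ^ a ∣ f i) (hgcd : ∀ e, (∀ i, e ∣ f i) → e ∣ z ^ a) :
    ∃ i, Associated (z ^ a) (f i) := by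
  by_contra! h
  have hsucc : ∀ i, z ^ (a + 1) ∣ f i := by
    intro i
    obtain ⟨w, hw⟩ := hdvd i
    have hwu : ¬IsUnit w := fun hwu => h i ⟨hwu.unit, hw.symm⟩
    rw [hw, pow_succ]
    exact mul_dvd_mul_left _ (hz.dvd_of_not_isUnit hwu)
  have := (pow_dvd_pow_iff hz.ne_zero hz.not_isUnit).mp (hgcd _ hsucc)
  omega

namespace Matrix

section CommRing

variable {R : Type*} [CommRing R]

lemma exists_det_submatrix_succAbove_dvd {m : ℕ} {α : Type*} (M : Matrix (Fin (m + 1)) α R)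
    (r : Fin m → Fin (m + 1)) (c : Fin m → α) :
    ∃ i : Fin (m + 1), (M.submatrix i.succAbove c).det ∣ (M.submatrix r c).det := by
  obtain ⟨i, hi⟩ : ∃ i, i ∉ Set.range r := by
    by_contra! h
    simpa using Fintype.card_le_of_surjective r h
  choose σ hσ using fun k => Fin.exists_succAbove_eq (fun h => hi ⟨k, h⟩)
  refine ⟨i, ?_⟩
  have hfactor : M.submatrix r c =
      (1 : Matrix (Fin m) (Fin m) R).submatrix σ (Equiv.refl _) * M.submatrix i.succAbove c := by
    rw [one_submatrix_mul σ (Equiv.refl _)]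
    ext
    simp [hσ]
  rw [hfactor, det_mul]
  exact dvd_mul_left _ _

/-- The cofactors along the first column of the square matrices `[v | F.submatrix id c]`. -/
def signedMinors {m : ℕ} {α : Type*} (F : Matrix (Fin (m + 1)) α R) (c : Fin m → α) :
    Fin (m + 1) → R :=
  fun a => (-1) ^ (a : ℕ) * (F.submatrix a.succAbove c).det

lemma signedMinors_vecMul {m : ℕ} {α : Type*} [Fintype α] (F : Matrix (Fin (m + 1)) α R)
    (c : Fin m → α) : signedMinors F c ᵥ* F = fun p => (F.submatrix id (Fin.cons p c)).det := by
  ext p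
  rw [det_succ_column_zero]
  simp only [vecMul, dotProduct, signedMinors, submatrix_apply, id_eq, Fin.cons_zero,
    submatrix_submatrix, Function.id_comp, Fin.cons_comp_succ]
  exact Finset.sum_congr rfl fun a _ => by ring

section MulEqSmulOne

variable {m : ℕ} {α : Type*} [Fintype α] {F : Matrix (Fin (m + 1)) α R}
  {A : Matrix α (Fin (m + 1)) R} {d e : R}

lemma dvd_mul_det_submatrix_succAbove_of_mul_eq_smul_one (hA : F * A = d • 1)
    (he : ∀ c, e ∣ (F.submatrix id c).det) (i : Fin (m + 1)) (c : Fin m → α) :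
    e ∣ d * (F.submatrix i.succAbove c).det := by
  have key : d • signedMinors F c = (signedMinors F c ᵥ* F) ᵥ* A := by
    rw [vecMul_vecMul, hA, vecMul_smul, vecMul_one]
  have hi := congrFun key i
  rw [signedMinors_vecMul] at hi
  simp only [Pi.smul_apply, signedMinors, smul_eq_mul, vecMul, dotProduct] at hi
  have hsign : IsUnit ((-1 : R) ^ (i : ℕ)) := isUnit_neg_one.pow _
  rw [← hsign.dvd_mul_left, mul_left_comm, hi]
  exact Finset.dvd_sum fun p _ => (he _).mul_right _

lemma dvd_mul_det_submatrix_of_mul_eq_smul_one (hA : F * A = d • 1)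
    (he : ∀ c, e ∣ (F.submatrix id c).det) (r : Fin m → Fin (m + 1)) (c : Fin m → α) :
    e ∣ d * (F.submatrix r c).det := by
  obtain ⟨i, hi⟩ := exists_det_submatrix_succAbove_dvd F r c
  exact (dvd_mul_det_submatrix_succAbove_of_mul_eq_smul_one hA he i c).trans
    (mul_dvd_mul_left d hi)

end MulEqSmulOne

section Adjugate

variable {n : Type*} [Fintype n] [DecidableEq n]

lemma dvd_det_of_dvd_adjugate [Nonempty n] {B : Matrix n n R} {x : R}
    (hadj : ∀ i j, x ∣ B.adjugate i j) : x ∣ B.det := by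
  obtain ⟨i⟩ := ‹Nonempty n›
  have h := congrFun (congrFun (mul_adjugate B) i) i
  rw [smul_apply, one_apply_eq, smul_eq_mul, mul_one, mul_apply] at h
  exact h ▸ Finset.dvd_sum fun j _ => (hadj j i).mul_left _

lemma exists_mul_eq_smul_one_of_dvd_adjugate [IsDomain R] {B : Matrix n n R} {x d : R}
    (hx : x ≠ 0) (hdet : Associated (x * d) B.det) (hadj : ∀ i j, x ∣ B.adjugate i j) :
    ∃ A, B * A = d • 1 := by
  choose A₀ hA₀ using hadj
  obtain ⟨u, hu⟩ := hdet
  refine ⟨(↑u⁻¹ : R) • Matrix.of A₀, ?_⟩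
  have hx' : x • (B * Matrix.of A₀) = x • ((d * u) • (1 : Matrix n n R)) := by
    rw [← Matrix.mul_smul, ← smul_assoc, smul_eq_mul, ← mul_assoc, hu, ← mul_adjugate]
    congr 1
    ext i j
    exact (hA₀ i j).symm
  rw [Matrix.mul_smul, smul_right_injective _ hx hx', smul_smul, mul_left_comm, Units.inv_mul,
    mul_one]

end Adjugate

end CommRing

variable {D : Type*} [CommRing D] [IsDomain D] {z : D} {m n : ℕ}
  {F : Matrix (Fin (m + 1)) (Fin n) D} {a b : ℕ}

lemma sub_le_of_mul_eq_pow_smul_one (hz : z ≠ 0) (hzu : ¬IsUnit z)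
    {A : Matrix (Fin n) (Fin (m + 1)) D} {δ : ℕ} (hA : F * A = z ^ δ • 1)
    (hdvd : ∀ c : Fin (m + 1) → Fin n, z ^ a ∣ (F.submatrix id c).det)
    (hgcd : ∀ e, (∀ (r : Fin m → Fin (m + 1)) (c : Fin m → Fin n), e ∣ (F.submatrix r c).det) →
      e ∣ z ^ b) :
    a - b ≤ δ := by
  have h : z ^ (a - δ) ∣ z ^ b := hgcd _ fun r c =>
    pow_sub_dvd_of_pow_dvd_pow_mul hz (dvd_mul_det_submatrix_of_mul_eq_smul_one hA hdvd r c)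
  have := (pow_dvd_pow_iff hz hzu).mp h
  omega

lemma exists_mul_eq_pow_sub_smul_one [IsDiscreteValuationRing D] (hz : Irreducible z)
    (hdvd : ∀ c : Fin (m + 1) → Fin n, z ^ a ∣ (F.submatrix id c).det)
    (hgcd : ∀ e, (∀ c : Fin (m + 1) → Fin n, e ∣ (F.submatrix id c).det) → e ∣ z ^ a)
    (hminor : ∀ (r : Fin m → Fin (m + 1)) (c : Fin m → Fin n), z ^ b ∣ (F.submatrix r c).det) :
    ∃ A : Matrix (Fin n) (Fin (m + 1)) D, F * A = z ^ (a - b) • 1 := by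
  obtain ⟨c, hc⟩ := hz.exists_associated_pow_of_isGCD hdvd hgcd
  have hadj : ∀ i j, z ^ b ∣ (F.submatrix id c).adjugate i j := fun i j => by
    rw [adjugate_fin_succ_eq_det_submatrix, submatrix_submatrix]
    exact (hminor _ _).mul_left _
  have hba : b ≤ a := (pow_dvd_pow_iff hz.ne_zero hz.not_isUnit).mp
    ((dvd_det_of_dvd_adjugate hadj).trans hc.symm.dvd)
  obtain ⟨A, hA⟩ := exists_mul_eq_smul_one_of_dvd_adjugate (pow_ne_zero b hz.ne_zero)
    (by rwa [← pow_add, Nat.add_sub_cancel' hba]) hadj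
  refine ⟨(1 : Matrix (Fin n) (Fin n) D).submatrix (Equiv.refl _) c * A, ?_⟩
  rw [← Matrix.mul_assoc, mul_submatrix_one, ← hA]
  rfl

end Matrix

theorem stmt7_general {ω n : ℕ} (hω : 0 < ω)
    (D : Type*) [CommRing D] [IsDomain D] [IsDiscreteValuationRing D]
    (z : D) (hz : Irreducible z)
    (F : Matrix (Fin ω) (Fin n) D)
    (Δω Δω₁ : D) (vω vω₁ : ℕ)
    (hgcdω : (∀ c : Fin ω → Fin n, Δω ∣ (F.submatrix id c).det) ∧
      ∀ e : D, (∀ c : Fin ω → Fin n, e ∣ (F.submatrix id c).det) → e ∣ Δω)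
    (hgcdω₁ : (∀ (r : Fin (ω - 1) → Fin ω) (c : Fin (ω - 1) → Fin n),
        Δω₁ ∣ (F.submatrix r c).det) ∧
      ∀ e : D, (∀ (r : Fin (ω - 1) → Fin ω) (c : Fin (ω - 1) → Fin n),
        e ∣ (F.submatrix r c).det) → e ∣ Δω₁)
    (hvω : Associated (z ^ vω) Δω) (hvω₁ : Associated (z ^ vω₁) Δω₁) :
    IsLeast {δ : ℕ | ∃ A : Matrix (Fin n) (Fin ω) D,
      F * A = z ^ δ • (1 : Matrix (Fin ω) (Fin ω) D)} (vω - vω₁) := by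
  obtain ⟨m, rfl⟩ : ∃ m, ω = m + 1 := Nat.exists_eq_add_one_of_ne_zero hω.ne'
  obtain ⟨hdvdω, hgcdω⟩ := hgcdω
  obtain ⟨hdvdω₁, hgcdω₁⟩ := hgcdω₁
  have hpowω : ∀ c, z ^ vω ∣ (F.submatrix id c).det := fun c => hvω.dvd.trans (hdvdω c)
  constructor
  · exact exists_mul_eq_pow_sub_smul_one hz hpowω (fun e he => (hgcdω e he).trans hvω.symm.dvd)
      fun r c => hvω₁.dvd.trans (hdvdω₁ r c)
  · rintro δ ⟨A, hA⟩
    exact sub_le_of_mul_eq_pow_smul_one hz.ne_zero hz.not_isUnit hA hpowω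
      fun e he => (hgcdω₁ e he).trans hvω₁.symm.dvd

/-- Let `F` be an `ω × n` matrix of rank `ω` over a DVR `D` with uniformizer `z`.
Let `Δ_ω` (resp. `Δ_{ω-1}`) be a gcd of all `ω × ω` (resp. `(ω-1) × (ω-1)`) minors
of `F`, with valuations `vω` and `vω₁` (so `Δ_ω ∼ z^{vω}`, `Δ_{ω-1} ∼ z^{vω₁}`).
Then the minimum `δ ≥ 0` for which `F · A = z^δ · I` is solvable equals
`v(Δ_ω) - v(Δ_{ω-1})`. -/
theorem stmt7 {ω n : ℕ} (hω : 0 < ω) (hn : ω ≤ n)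
    (D : Type*) [CommRing D] [IsDomain D] [IsDiscreteValuationRing D]
    (z : D) (hz : Irreducible z)
    (F : Matrix (Fin ω) (Fin n) D) (hrank : F.rank = ω)
    (Δω Δω₁ : D) (vω vω₁ : ℕ)
    (hgcdω : (∀ c : Fin ω → Fin n, Δω ∣ (F.submatrix id c).det) ∧
      ∀ e : D, (∀ c : Fin ω → Fin n, e ∣ (F.submatrix id c).det) → e ∣ Δω)
    (hgcdω₁ : (∀ (r : Fin (ω - 1) → Fin ω) (c : Fin (ω - 1) → Fin n),
        Δω₁ ∣ (F.submatrix r c).det) ∧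
      ∀ e : D, (∀ (r : Fin (ω - 1) → Fin ω) (c : Fin (ω - 1) → Fin n),
        e ∣ (F.submatrix r c).det) → e ∣ Δω₁)
    (hvω : Associated (z ^ vω) Δω) (hvω₁ : Associated (z ^ vω₁) Δω₁) :
    IsLeast {δ : ℕ | ∃ A : Matrix (Fin n) (Fin ω) D,
      F * A = z ^ δ • (1 : Matrix (Fin ω) (Fin ω) D)} (vω - vω₁) :=
  stmt7_general hω D z hz F Δω Δω₁ vω vω₁ hgcdω hgcdω₁ hvω hvω₁
end

section
/- Let D be a discrete valuation ring with uniformizer z, and let F be an ω × n matrix over D. Suppose there exist an n × ω matrix A over D and δ ≥ 0 such that F · A ≡ z^δ · I_ω (mod z^{δ+1}). Then F has rank ω over the fraction field of D, and every invariant factor z^{i_j} of the column module of F satisfies i_j ≤ δ. -/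
/-! The hypothesis says `F * A = z ^ δ • W` with `W ≡ 1 (mod z)`, so `W` is invertible over the
local ring `D`. Hence `F * A` is invertible over the fraction field, which forces rank `ω`. If
`F = U * S * V` with `S` in Smith form, then `S * (V * A * W⁻¹ * U) = z ^ δ • 1`; since `z ^ i j`
divides row `j` of `S`, it divides the diagonal entry `z ^ δ`. -/

open Matrix IsLocalRing

section LocalRing

variable {R : Type*} [CommRing R] [IsLocalRing R] {ι : Type*} [Fintype ι] [DecidableEq ι]

theorem Matrix.isUnit_one_add_smul_of_mem_maximalIdeal {x : R} (hx : x ∈ maximalIdeal R)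
    (M : Matrix ι ι R) : IsUnit (1 + x • M) := by
  have hres : (residue R).mapMatrix (1 + x • M) = 1 := by
    rw [map_add, map_one, (residue R).mapMatrix_apply, Matrix.map_smul' _ _ _ (map_mul _),
      (residue_eq_zero_iff x).2 hx, zero_smul, add_zero]
  rw [isUnit_iff_isUnit_det, ← residue_ne_zero_iff_isUnit, RingHom.map_det, hres, det_one]
  exact one_ne_zero

theorem Matrix.exists_isUnit_eq_pow_smul_of_sub_mem_span {z : R} (hz : z ∈ maximalIdeal R)
    {δ : ℕ} {P : Matrix ι ι R} (h : ∀ j k, (P - z ^ δ • 1) j k ∈ Ideal.span {z ^ (δ + 1)}) :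
    ∃ W : Matrix ι ι R, IsUnit W ∧ P = z ^ δ • W := by
  choose B hB using fun j k => Ideal.mem_span_singleton.mp (h j k)
  refine ⟨1 + z • Matrix.of B, isUnit_one_add_smul_of_mem_maximalIdeal hz _, ?_⟩
  ext j k
  have hjk := hB j k
  simp only [sub_apply, smul_apply, smul_eq_mul, add_apply, of_apply] at hjk ⊢
  linear_combination hjk

end LocalRing

theorem Matrix.rank_map_eq_of_det_mul_ne_zero {D K : Type*} [CommRing D] [Field K]
    {φ : D →+* K} (hφ : Function.Injective φ) {m n : ℕ}
    (F : Matrix (Fin m) (Fin n) D) (A : Matrix (Fin n) (Fin m) D) (hFA : (F * A).det ≠ 0) :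
    (F.map φ).rank = m := by
  have hunit : IsUnit (F.map φ * A.map φ) := by
    rw [← Matrix.map_mul, isUnit_iff_isUnit_det, isUnit_iff_ne_zero, ← RingHom.mapMatrix_apply,
      ← RingHom.map_det]
    exact (map_ne_zero_iff φ hφ).2 hFA
  refine le_antisymm (rank_le_height _) ?_
  calc m = (F.map φ * A.map φ).rank := by rw [rank_of_isUnit _ hunit, Fintype.card_fin]
    _ ≤ (F.map φ).rank := rank_mul_le_left _ _

theorem Matrix.dvd_of_mul_eq_smul_one {R : Type*} [CommRing R] {m n : Type*} [Fintype n]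
    [DecidableEq m] {S : Matrix m n R} {X : Matrix n m R} {c d : R} (hSX : S * X = c • 1)
    (j : m) (hd : ∀ k, d ∣ S j k) : d ∣ c := by
  have hc : c = (S * X) j j := by simp [hSX]
  rw [hc, mul_apply]
  exact Finset.dvd_sum fun k _ => dvd_mul_of_dvd_left (hd k) _

theorem Matrix.exists_mul_eq_smul_one_of_mul_eq_smul {R : Type*} [CommRing R]
    {m n : Type*} [Fintype m] [DecidableEq m] [Fintype n]
    {U W : Matrix m m R} (hU : IsUnit U) (hW : IsUnit W) {S : Matrix m n R}
    {Y : Matrix n m R} {c : R} (h : U * S * Y = c • W) :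
    ∃ X : Matrix n m R, S * X = c • (1 : Matrix m m R) := by
  rw [isUnit_iff_isUnit_det] at hU hW
  refine ⟨Y * W⁻¹ * U, ?_⟩
  have hSY : S * Y = c • (U⁻¹ * W) := by
    rw [← Matrix.mul_smul, ← h, Matrix.mul_assoc U, ← Matrix.mul_assoc U⁻¹,
      nonsing_inv_mul _ hU, Matrix.one_mul]
  rw [← Matrix.mul_assoc, ← Matrix.mul_assoc, hSY, smul_mul, smul_mul, Matrix.mul_assoc U⁻¹,
    mul_nonsing_inv _ hW, Matrix.mul_one, nonsing_inv_mul _ hU]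

/-- If `F · A ≡ z^δ · I (mod z^{δ+1})` for some `A` over the DVR `D`, then `F` has
rank `ω` over the fraction field of `D`, and every invariant factor `z^{i_j}` of the
column module of `F` (read off from any Smith normal form of `F`) satisfies
`i_j ≤ δ`. -/
theorem stmt11 {ω n : ℕ}
    (D : Type*) [CommRing D] [IsDomain D] [IsDiscreteValuationRing D]
    (z : D) (hz : Irreducible z)
    (F : Matrix (Fin ω) (Fin n) D) (A : Matrix (Fin n) (Fin ω) D) (δ : ℕ)
    (h : ∀ j k, (F * A - z ^ δ • (1 : Matrix (Fin ω) (Fin ω) D)) j k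
      ∈ Ideal.span {z ^ (δ + 1)}) :
    (F.map (algebraMap D (FractionRing D))).rank = ω ∧
    ∀ (i : Fin ω → ℕ) (U : Matrix (Fin ω) (Fin ω) D) (V : Matrix (Fin n) (Fin n) D),
      IsUnit U → IsUnit V →
      F = U * (Matrix.of fun (j : Fin ω) (k : Fin n) =>
        if (j : ℕ) = (k : ℕ) then z ^ i j else 0) * V →
      ∀ j, i j ≤ δ := by
  obtain ⟨W, hW, hFA⟩ := exists_isUnit_eq_pow_smul_of_sub_mem_span
    ((mem_maximalIdeal z).2 hz.not_isUnit) h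
  have hdet : (F * A).det ≠ 0 := by
    rw [hFA, det_smul]
    exact mul_ne_zero (pow_ne_zero _ (pow_ne_zero _ hz.ne_zero))
      ((isUnit_iff_isUnit_det W).1 hW).ne_zero
  refine ⟨rank_map_eq_of_det_mul_ne_zero (IsFractionRing.injective D _) F A hdet, ?_⟩
  intro i U V hU _ hF j
  obtain ⟨X, hX⟩ := exists_mul_eq_smul_one_of_mul_eq_smul hU hW
    (Y := V * A) (by rw [← Matrix.mul_assoc, ← hF, hFA])
  refine (pow_dvd_pow_iff hz.ne_zero hz.not_isUnit).1 (dvd_of_mul_eq_smul_one hX j fun k => ?_)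
  simp only [of_apply]
  split_ifs
  exacts [dvd_rfl, dvd_zero _]
end
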